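/- For every integer n ≥ 4, the integral over ℝ^{n−3} of the function (s₁,…,s_{n−3}) ↦ 1 / (∏_{i=1}^{n−3}(1 + e^{−sᵢ}) · (1 + ∑_{j=1}^{n−3} e^{s₁+⋯+s_j})) equals the integral over the open cube (0,1)^{n−3} of the function u ↦ 1/Q_{n−3}(u), where for m ≥ 1 the polynomial Q_m is defined by Q_m(u₁,…,u_m) = ∑_{i=0}^{m} (∏_{r=1}^{i} u_r) · (∏_{r=i+1}^{m} (1 − u_r)). -/

import Mathlib

open MeasureTheory Real

/-- Extend a tuple `s : Fin m → ℝ` to a function on `ℕ` (0-indexed), by `0` outside. -/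
noncomputable def padR (m : ℕ) (s : Fin m → ℝ) (i : ℕ) : ℝ :=
  if h : i < m then s ⟨i, h⟩ else 0

/-- The polynomial `Q_m(u₁,…,u_m) = ∑_{i=0}^m (∏_{r=1}^i u_r)(∏_{r=i+1}^m (1-u_r))`,
with the variables `u₁,…,u_m` encoded 0-indexed as `u : Fin m → ℝ`. -/
noncomputable def Qpoly (m : ℕ) (u : Fin m → ℝ) : ℝ :=
  ∑ i ∈ Finset.range (m + 1),
    (∏ r ∈ Finset.range i, padR m u r) * ∏ r ∈ Finset.Ico i m, (1 - padR m u r)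

noncomputable def sig (x : ℝ) : ℝ := (1 + Real.exp (-x))⁻¹
noncomputable def dsig (x : ℝ) : ℝ := Real.exp (-x) * sig x ^ 2

lemma one_add_exp_pos (x : ℝ) : 0 < 1 + Real.exp (-x) := by positivity

lemma sig_pos (x : ℝ) : 0 < sig x := inv_pos.2 (one_add_exp_pos x)

lemma sig_lt_one (x : ℝ) : sig x < 1 := by
  rw [sig]
  rw [inv_lt_one_iff₀]
  right
  have := Real.exp_pos (-x)
  linarith

lemma one_sub_sig (x : ℝ) : 1 - sig x = Real.exp (-x) * sig x := by
  have h := one_add_exp_pos x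
  rw [sig]
  field_simp
  ring

lemma dsig_pos (x : ℝ) : 0 < dsig x := by
  have := sig_pos x
  rw [dsig]; positivity

lemma hasDerivAt_sig (x : ℝ) : HasDerivAt sig (dsig x) x := by
  have h1 : HasDerivAt (fun y : ℝ => 1 + Real.exp (-y)) (Real.exp (-x) * (-1)) x :=
    ((hasDerivAt_neg x).exp).const_add 1
  have h2 : HasDerivAt sig (-(Real.exp (-x) * -1) / (1 + Real.exp (-x)) ^ 2) x :=
    h1.inv (ne_of_gt (one_add_exp_pos x))
  convert h2 using 1
  have h := one_add_exp_pos x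
  rw [dsig, sig]
  field_simp

lemma sig_strictMono : StrictMono sig := by
  intro a b hab
  have h1 : Real.exp (-b) < Real.exp (-a) := Real.exp_lt_exp.2 (by linarith)
  rw [sig, sig]
  exact inv_strictAnti₀ (one_add_exp_pos b) (by linarith)

lemma sig_surj {u : ℝ} (hu : u ∈ Set.Ioo (0:ℝ) 1) : sig (Real.log (u / (1 - u))) = u := by
  obtain ⟨h0, h1⟩ := hu
  have h1' : 0 < 1 - u := by linarith
  rw [sig, Real.exp_neg, Real.exp_log (div_pos h0 h1'), inv_div]
  rw [inv_eq_iff_eq_inv]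
  field_simp
  ring

lemma det_diag (m : ℕ) (c : Fin m → ℝ) :
    (ContinuousLinearMap.pi (fun i => c i •
      (ContinuousLinearMap.proj i : (Fin m → ℝ) →L[ℝ] ℝ))).det = ∏ i, c i := by
  have hM : LinearMap.toMatrix (Pi.basisFun ℝ (Fin m)) (Pi.basisFun ℝ (Fin m))
      (ContinuousLinearMap.pi (fun i => c i •
        (ContinuousLinearMap.proj i : (Fin m → ℝ) →L[ℝ] ℝ))).toLinearMap
      = Matrix.diagonal c := by
    ext i j
    simp [LinearMap.toMatrix_apply, Matrix.diagonal, Pi.single_apply, eq_comm]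
  rw [ContinuousLinearMap.det, ← LinearMap.det_toMatrix (Pi.basisFun ℝ (Fin m)), hM,
    Matrix.det_diagonal]

lemma Q_comp (m : ℕ) (s : Fin m → ℝ) :
    Qpoly m (fun i => sig (s i)) =
      (∏ r ∈ Finset.range m, sig (padR m s r)) *
        Real.exp (-(∑ r ∈ Finset.range m, padR m s r)) *
        (1 + ∑ j ∈ Finset.Icc 1 m, Real.exp (∑ r ∈ Finset.range j, padR m s r)) := by
  set a := padR m s with ha
  rw [Qpoly]
  have hpad : ∀ r, r < m → padR m (fun i => sig (s i)) r = sig (a r) := by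
    intro r hr; simp [padR, ha, hr]
  have hterm : ∀ i ∈ Finset.range (m+1),
      (∏ r ∈ Finset.range i, padR m (fun i => sig (s i)) r) *
        ∏ r ∈ Finset.Ico i m, (1 - padR m (fun i => sig (s i)) r)
      = ((∏ r ∈ Finset.range m, sig (a r)) *
          Real.exp (-(∑ r ∈ Finset.range m, a r))) *
          Real.exp (∑ r ∈ Finset.range i, a r) := by
    intro i hi
    rw [Finset.mem_range, Nat.lt_succ_iff] at hi
    have e1 : ∏ r ∈ Finset.range i, padR m (fun i => sig (s i)) r
        = ∏ r ∈ Finset.range i, sig (a r) :=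
      Finset.prod_congr rfl (fun r hr => hpad r (lt_of_lt_of_le (Finset.mem_range.1 hr) hi))
    have e2 : ∏ r ∈ Finset.Ico i m, (1 - padR m (fun i => sig (s i)) r)
        = ∏ r ∈ Finset.Ico i m, (Real.exp (-(a r)) * sig (a r)) :=
      Finset.prod_congr rfl (fun r hr => by
        rw [hpad r (Finset.mem_Ico.1 hr).2]; exact one_sub_sig (a r))
    rw [e1, e2, Finset.prod_mul_distrib, ← Real.exp_sum]
    have hsum : ∑ r ∈ Finset.range i, a r + ∑ r ∈ Finset.Ico i m, a r
        = ∑ r ∈ Finset.range m, a r := Finset.sum_range_add_sum_Ico a hi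
    have hprod : (∏ r ∈ Finset.range i, sig (a r)) * ∏ r ∈ Finset.Ico i m, sig (a r)
        = ∏ r ∈ Finset.range m, sig (a r) :=
      Finset.prod_range_mul_prod_Ico (fun r => sig (a r)) hi
    have he : Real.exp (∑ r ∈ Finset.Ico i m, -a r)
        = Real.exp (-(∑ r ∈ Finset.range m, a r)) * Real.exp (∑ r ∈ Finset.range i, a r) := by
      rw [← Real.exp_add]
      congr 1
      rw [Finset.sum_neg_distrib]
      linarith
    rw [he, ← hprod]
    ring
  rw [Finset.sum_congr rfl hterm, ← Finset.mul_sum]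
  congr 1
  rw [Finset.sum_range_succ']
  have : ∑ j ∈ Finset.Icc 1 m, Real.exp (∑ r ∈ Finset.range j, a r)
      = ∑ i ∈ Finset.range m, Real.exp (∑ r ∈ Finset.range (i + 1), a r) := by
    rw [← Finset.Ico_add_one_right_eq_Icc, Finset.sum_Ico_eq_sum_range]
    simp [Nat.add_comm]
  rw [this]
  simp [add_comm]

lemma integrand_eq (m : ℕ) (s : Fin m → ℝ) :
    |∏ i, dsig (s i)| * (1 / Qpoly m (fun i => sig (s i))) =
      1 / ((∏ i, (1 + Real.exp (-s i))) *
        (1 + ∑ j ∈ Finset.Icc 1 m, Real.exp (∑ r ∈ Finset.range j, padR m s r))) := by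
  have hP : ∏ r ∈ Finset.range m, sig (padR m s r) = ∏ i, sig (s i) := by
    rw [← Fin.prod_univ_eq_prod_range]
    exact Finset.prod_congr rfl fun i _ => by simp [padR]
  have hS : ∑ r ∈ Finset.range m, padR m s r = ∑ i, s i := by
    rw [← Fin.sum_univ_eq_sum_range]
    exact Finset.sum_congr rfl fun i _ => by simp [padR]
  set B := 1 + ∑ j ∈ Finset.Icc 1 m, Real.exp (∑ r ∈ Finset.range j, padR m s r) with hB
  have hBpos : 0 < B := by
    rw [hB]
    have : 0 ≤ ∑ j ∈ Finset.Icc 1 m, Real.exp (∑ r ∈ Finset.range j, padR m s r) :=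
      Finset.sum_nonneg fun j _ => (Real.exp_pos _).le
    linarith
  have hQ : Qpoly m (fun i => sig (s i))
      = (∏ i, sig (s i)) * Real.exp (-(∑ i, s i)) * B := by
    rw [Q_comp, hP, hS]
  have hD : ∏ i, dsig (s i) = Real.exp (-(∑ i, s i)) * (∏ i, sig (s i)) ^ 2 := by
    simp only [dsig]
    rw [Finset.prod_mul_distrib, ← Real.exp_sum, Finset.prod_pow]
    congr 1
    rw [← Finset.sum_neg_distrib]
  have hA : ∏ i, (1 + Real.exp (-s i)) = (∏ i, sig (s i))⁻¹ := by
    rw [← Finset.prod_inv_distrib]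
    exact Finset.prod_congr rfl fun i _ => by rw [sig, inv_inv]
  have hPpos : 0 < ∏ i, sig (s i) := Finset.prod_pos fun i _ => sig_pos _
  have hDpos : 0 < ∏ i, dsig (s i) := Finset.prod_pos fun i _ => dsig_pos _
  rw [abs_of_pos hDpos, hD, hQ, hA]
  have he := Real.exp_pos (-(∑ i, s i))
  field_simp

lemma main_cov (m : ℕ) :
    (∫ s : Fin m → ℝ,
        1 / ((∏ i, (1 + Real.exp (-s i))) *
          (1 + ∑ j ∈ Finset.Icc 1 m,
            Real.exp (∑ r ∈ Finset.range j, padR m s r))))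
      = ∫ u in {u : Fin m → ℝ | ∀ i, u i ∈ Set.Ioo (0 : ℝ) 1},
          1 / Qpoly m u := by
  have himg : (fun (s : Fin m → ℝ) i => sig (s i)) '' Set.univ
      = {u : Fin m → ℝ | ∀ i, u i ∈ Set.Ioo (0:ℝ) 1} := by
    ext u
    constructor
    · rintro ⟨s, -, rfl⟩ i
      exact ⟨sig_pos _, sig_lt_one _⟩
    · intro hu
      exact ⟨fun i => Real.log (u i / (1 - u i)), Set.mem_univ _,
        funext fun i => sig_surj (hu i)⟩
  have hder : ∀ s ∈ (Set.univ : Set (Fin m → ℝ)),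
      HasFDerivWithinAt (fun (s : Fin m → ℝ) i => sig (s i))
        (ContinuousLinearMap.pi fun i => dsig (s i) •
          (ContinuousLinearMap.proj i : (Fin m → ℝ) →L[ℝ] ℝ)) Set.univ s := by
    intro s _
    apply HasFDerivAt.hasFDerivWithinAt
    apply hasFDerivAt_pi.2
    intro i
    exact (hasDerivAt_sig (s i)).comp_hasFDerivAt (f := fun x : Fin m → ℝ => x i) s (hasFDerivAt_apply i s)
  have hinj : Set.InjOn (fun (s : Fin m → ℝ) i => sig (s i)) Set.univ := by
    intro a _ b _ h
    funext i
    exact sig_strictMono.injective (congrFun h i)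
  rw [← himg,
    integral_image_eq_integral_abs_det_fderiv_smul volume MeasurableSet.univ hder hinj
      (fun u => 1 / Qpoly m u),
    MeasureTheory.setIntegral_univ]
  congr 1
  funext s
  rw [det_diag, smul_eq_mul, integrand_eq]


/-- The Mirzakhani volume `V_{𝔻ₙ}` of the moduli space of ideal `n`-gons in shearing
coordinates equals `∫_{(0,1)^{n-3}} du / Q_{n-3}(u)` after the change of variables
`u_j = 1/(1 + e^{-s_j})`. -/
theorem ngon_volume_Q (n : ℕ) (hn : 4 ≤ n) :
    (∫ s : Fin (n - 3) → ℝ,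
        1 / ((∏ i, (1 + Real.exp (-s i))) *
          (1 + ∑ j ∈ Finset.Icc 1 (n - 3),
            Real.exp (∑ r ∈ Finset.range j, padR (n - 3) s r))))
      = ∫ u in {u : Fin (n - 3) → ℝ | ∀ i, u i ∈ Set.Ioo (0 : ℝ) 1},
          1 / Qpoly (n - 3) u := by
  exact main_cov (n - 3)
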